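/- Combined two-sided guarantee: under the main-bound setup with positive expected margin μ = ∑_i (2p_i-1)q_i > 0 and square-sum bound Σ = ∑_i ((T-1)(2p_i-1)²+4), the probability that the net vote V = μ + ∑_k D_k satisfies V > 0 is at least 1 - exp(-μ²/(2Σ)), and the probability that V' = -μ + ∑_k D'_k (the net vote under the wrong state) satisfies V' > 0 is at most exp(-μ²/(2Σ)); hence both the correctness probability and one minus the hallucination probability admit the same exponential guarantee. -/

import Mathlib

/-! Bounding `exp` on `[-c, c]` by its chord, `e^{tx} ≤ cosh (tc) + (sinh (tc) / c) x`, and taking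
conditional expectations shows that a martingale difference with `|D_k| ≤ c_k` has conditional
moment generating function at most `exp (c_k² t² / 2)`. Peeling off the last increment inductively,
`∑ D_k` is sub-Gaussian with variance proxy `Σ = ∑ c_k²`, and the Chernoff bound at `ε = μ̄`,
applied to `-∑ D_k` and to `∑ D'_k`, gives both tails `exp (-μ̄² / (2Σ))`. Mathlib's Azuma–Hoeffding
inequality goes through conditional kernels and needs a standard Borel sample space, which is why
the conditional step is done here with conditional expectations. -/

open MeasureTheory Filter

open Real in
theorem Real.exp_mul_le_cosh_add_sinh_div_mul (t : ℝ) {c x : ℝ} (hx : |x| ≤ c) :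
    exp (t * x) ≤ cosh (t * c) + sinh (t * c) / c * x := by
  obtain ⟨hcx, hxc⟩ := abs_le.mp hx
  rcases (abs_nonneg x).trans hx |>.eq_or_lt with rfl | hc
  · simp [show x = 0 by linarith]
  have hconv := convexOn_exp.2 (Set.mem_univ (-(t * c))) (Set.mem_univ (t * c))
    (div_nonneg (by linarith : 0 ≤ c - x) (by linarith : 0 ≤ 2 * c))
    (div_nonneg (by linarith : 0 ≤ c + x) (by linarith : 0 ≤ 2 * c)) (by field_simp; ring)
  calc exp (t * x)
      = exp (((c - x) / (2 * c)) • -(t * c) + ((c + x) / (2 * c)) • (t * c)) := by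
        simp only [smul_eq_mul]
        field_simp
        ring_nf
    _ ≤ ((c - x) / (2 * c)) • exp (-(t * c)) + ((c + x) / (2 * c)) • exp (t * c) := hconv
    _ = cosh (t * c) + sinh (t * c) / c * x := by
        rw [cosh_eq, sinh_eq]
        simp only [smul_eq_mul]
        field_simp
        ring

namespace ProbabilityTheory

open Real

variable {Ω : Type*} {m m0 : MeasurableSpace Ω} {μ : Measure Ω}

theorem condExp_exp_mul_ae_le_of_condExp_eq_zero [IsFiniteMeasure μ] (hm : m ≤ m0)
    {X : Ω → ℝ} {c : ℝ} (hX : Integrable X μ) (hX0 : μ[X | m] =ᵐ[μ] 0)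
    (hXc : ∀ᵐ ω ∂μ, |X ω| ≤ c) (t : ℝ) :
    μ[fun ω ↦ exp (t * X ω) | m] ≤ᵐ[μ] fun _ ↦ exp (c ^ 2 * t ^ 2 / 2) := by
  set r := sinh (t * c) / c
  have hlin : Integrable (fun ω ↦ cosh (t * c) + r * X ω) μ :=
    (integrable_const _).add (hX.const_mul r)
  have hmono :
      μ[fun ω ↦ exp (t * X ω) | m] ≤ᵐ[μ] μ[fun ω ↦ cosh (t * c) + r * X ω | m] := by
    refine condExp_mono (integrable_exp_mul_of_mem_Icc (a := -c) (b := c) hX.aemeasurable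
      (hXc.mono fun ω h ↦ abs_le.mp h)) hlin ?_
    filter_upwards [hXc] with ω hω using exp_mul_le_cosh_add_sinh_div_mul t hω
  have hlin_cond : μ[fun ω ↦ cosh (t * c) + r * X ω | m] =ᵐ[μ] fun _ ↦ cosh (t * c) := by
    have hsplit :
        (fun ω ↦ cosh (t * c) + r * X ω) = (fun _ ↦ cosh (t * c)) + r • X := rfl
    rw [hsplit]
    filter_upwards [condExp_add (integrable_const (cosh (t * c))) (hX.smul r) m,
      condExp_smul (μ := μ) r X m, hX0] with ω hadd hsmul h0
    simp [hadd, hsmul, h0, condExp_const hm]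
  have hcosh : cosh (t * c) ≤ exp (c ^ 2 * t ^ 2 / 2) :=
    (cosh_le_exp_half_sq _).trans_eq (by ring_nf)
  filter_upwards [hmono, hlin_cond] with ω h1 h2 using (h1.trans_eq h2).trans hcosh

theorem HasSubgaussianMGF.add_of_condExp_eq_zero [IsFiniteMeasure μ] (hm : m ≤ m0)
    {X Y : Ω → ℝ} {cX : NNReal} {c : ℝ} (hXm : StronglyMeasurable[m] X)
    (hX : HasSubgaussianMGF X cX μ)
    (hY : Integrable Y μ) (hY0 : μ[Y | m] =ᵐ[μ] 0) (hYc : ∀ᵐ ω ∂μ, |Y ω| ≤ c) :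
    HasSubgaussianMGF (fun ω ↦ X ω + Y ω) (cX + ‖c‖₊ ^ 2) μ := by
  have hexp_add (t : ℝ) (ω : Ω) :
      exp (t * (X ω + Y ω)) = exp (t * X ω) * exp (t * Y ω) := by
    rw [mul_add, exp_add]
  have hexpY_bdd (t : ℝ) : ∀ᵐ ω ∂μ, ‖exp (t * Y ω)‖ ≤ exp (|t| * c) := by
    filter_upwards [hYc] with ω hω
    rw [norm_of_nonneg (exp_pos _).le, exp_le_exp]
    exact (le_abs_self _).trans (by rw [abs_mul]; gcongr)
  have hint (t : ℝ) : Integrable (fun ω ↦ exp (t * X ω) * exp (t * Y ω)) μ :=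
    (hX.integrable_exp_mul t).mul_bdd (by fun_prop) (hexpY_bdd t)
  refine ⟨fun t ↦ by simpa only [hexp_add] using hint t, fun t ↦ ?_⟩
  have hXm' : StronglyMeasurable[m] fun ω ↦ exp (t * X ω) :=
    continuous_exp.comp_stronglyMeasurable (hXm.const_mul t)
  have hcond := condExp_exp_mul_ae_le_of_condExp_eq_zero hm hY hY0 hYc t
  calc mgf (fun ω ↦ X ω + Y ω) μ t
      = ∫ ω, μ[fun ω ↦ exp (t * X ω) * exp (t * Y ω) | m] ω ∂μ := by
        simp only [mgf, hexp_add, integral_condExp hm]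
    _ ≤ ∫ ω, exp (t * X ω) * exp (c ^ 2 * t ^ 2 / 2) ∂μ := by
        refine integral_mono_ae integrable_condExp ((hX.integrable_exp_mul t).mul_const _) ?_
        filter_upwards [condExp_mul_of_stronglyMeasurable_left hXm' (hint t)
          (integrable_exp_mul_of_mem_Icc (a := -c) (b := c) hY.aemeasurable
            (hYc.mono fun ω h ↦ abs_le.mp h)), hcond] with ω hpull hω
        exact hpull.trans_le (mul_le_mul_of_nonneg_left hω (exp_pos _).le)
    _ = mgf X μ t * exp (c ^ 2 * t ^ 2 / 2) := integral_mul_const _ _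
    _ ≤ exp (cX * t ^ 2 / 2) * exp (c ^ 2 * t ^ 2 / 2) := by
        gcongr
        exact hX.mgf_le t
    _ = exp (↑(cX + ‖c‖₊ ^ 2) * t ^ 2 / 2) := by
        rw [← exp_add, NNReal.coe_add, NNReal.coe_pow, coe_nnnorm, norm_eq_abs, sq_abs]
        ring_nf

theorem HasSubgaussianMGF.sum_range_of_condExp_eq_zero [IsZeroOrProbabilityMeasure μ]
    (ℱ : Filtration ℕ m0) {D : ℕ → Ω → ℝ} {c : ℕ → ℝ}
    (hadapted : ∀ k, StronglyMeasurable[ℱ (k + 1)] (D k))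
    (hint : ∀ k, Integrable (D k) μ) (hzero : ∀ k, μ[D k | ℱ k] =ᵐ[μ] 0)
    (hbdd : ∀ k, ∀ᵐ ω ∂μ, |D k ω| ≤ c k) (K : ℕ) :
    HasSubgaussianMGF (fun ω ↦ ∑ k ∈ Finset.range K, D k ω)
      (∑ k ∈ Finset.range K, ‖c k‖₊ ^ 2) μ := by
  induction K with
  | zero => simp
  | succ K ih =>
    simp_rw [Finset.sum_range_succ]
    have hmeas : StronglyMeasurable[ℱ K] fun ω ↦ ∑ k ∈ Finset.range K, D k ω :=
      Finset.stronglyMeasurable_fun_sum _ fun k hk ↦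
        (hadapted k).mono (ℱ.mono (Finset.mem_range.mp hk))
    exact ih.add_of_condExp_eq_zero (ℱ.le K) hmeas (hint K) (hzero K) (hbdd K)

theorem HasSubgaussianMGF.measure_ge_le_ofReal [IsFiniteMeasure μ] {X : Ω → ℝ} {c : NNReal}
    (h : HasSubgaussianMGF X c μ) {ε : ℝ} (hε : 0 ≤ ε) :
    μ {ω | ε ≤ X ω} ≤ ENNReal.ofReal (exp (-ε ^ 2 / (2 * c))) :=
  (ENNReal.le_ofReal_iff_toReal_le (measure_ne_top _ _) (exp_pos _).le).2 (h.measure_ge_le hε)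

end ProbabilityTheory

theorem two_sided_guarantee_general
    {Ω : Type*} {m0 : MeasurableSpace Ω} {μ : Measure Ω} [IsProbabilityMeasure μ]
    (ℱ ℱ' : Filtration ℕ m0) (K N T : ℕ)
    (D D' : ℕ → Ω → ℝ) (c : ℕ → ℝ) (p : ℕ → ℝ) (m : ℝ) (V V' : Ω → ℝ)
    (hadapted : ∀ k, StronglyMeasurable[ℱ (k + 1)] (D k))
    (hadapted' : ∀ k, StronglyMeasurable[ℱ' (k + 1)] (D' k))
    (hint : ∀ k, Integrable (D k) μ) (hint' : ∀ k, Integrable (D' k) μ)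
    (hzero : ∀ k, μ[D k | ℱ k] =ᵐ[μ] 0)
    (hzero' : ∀ k, μ[D' k | ℱ' k] =ᵐ[μ] 0)
    (hbdd : ∀ k, ∀ᵐ ω ∂μ, |D k ω| ≤ c k)
    (hbdd' : ∀ k, ∀ᵐ ω ∂μ, |D' k ω| ≤ c k)
    (hmpos : 0 < m)
    (hsq : ∑ k ∈ Finset.range K, (c k) ^ 2
        = ∑ i ∈ Finset.range N, (((T : ℝ) - 1) * (2 * p i - 1) ^ 2 + 4))
    (hV : ∀ ω, V ω = m + ∑ k ∈ Finset.range K, D k ω)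
    (hV' : ∀ ω, V' ω = -m + ∑ k ∈ Finset.range K, D' k ω) :
    μ {ω | 0 < V ω}
        ≥ ENNReal.ofReal (1 - Real.exp (-m ^ 2 /
            (2 * ∑ i ∈ Finset.range N, (((T : ℝ) - 1) * (2 * p i - 1) ^ 2 + 4))))
    ∧ μ {ω | 0 < V' ω}
        ≤ ENNReal.ofReal (Real.exp (-m ^ 2 /
            (2 * ∑ i ∈ Finset.range N, (((T : ℝ) - 1) * (2 * p i - 1) ^ 2 + 4)))) := by
  have hvar :
      ((∑ k ∈ Finset.range K, ‖c k‖₊ ^ 2 : NNReal) : ℝ) = ∑ k ∈ Finset.range K, c k ^ 2 := by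
    push_cast
    simp only [Real.norm_eq_abs, sq_abs]
  have hlower := (ProbabilityTheory.HasSubgaussianMGF.sum_range_of_condExp_eq_zero ℱ
    hadapted hint hzero hbdd K).neg.measure_ge_le_ofReal hmpos.le
  have hupper := (ProbabilityTheory.HasSubgaussianMGF.sum_range_of_condExp_eq_zero ℱ'
    hadapted' hint' hzero' hbdd' K).measure_ge_le_ofReal hmpos.le
  rw [hvar, hsq] at hlower hupper
  constructor
  · rw [ge_iff_le, ENNReal.ofReal_sub _ (Real.exp_pos _).le, ENNReal.ofReal_one,
      tsub_le_iff_right]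
    have hcover : Set.univ ⊆
        {ω | 0 < V ω} ∪ {ω | m ≤ (-fun ω ↦ ∑ k ∈ Finset.range K, D k ω) ω} :=
      fun ω _ ↦ (lt_or_ge 0 (V ω)).imp id fun h ↦
        show m ≤ -∑ k ∈ Finset.range K, D k ω by linarith [hV ω]
    calc 1 = μ Set.univ := measure_univ.symm
      _ ≤ _ := (measure_mono hcover).trans (measure_union_le _ _)
      _ ≤ _ := add_le_add_right hlower _
  · refine (measure_mono fun ω hω ↦ ?_).trans hupper
    simp only [Set.mem_ofPred_eq, hV'] at hω ⊢
    linarith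

/-- Combined two-sided guarantee: with positive expected margin
`μ̄ = ∑ (2p_i-1)q_i > 0` and square-sum `Σ = ∑ ((T-1)(2p_i-1)²+4)`, the net vote
under the true state `V = μ̄ + ∑ D_k` satisfies
`P(V > 0) ≥ 1 - exp(-μ̄²/(2Σ))`, and the net vote under the wrong state
`V' = -μ̄ + ∑ D'_k` satisfies `P(V' > 0) ≤ exp(-μ̄²/(2Σ))`. -/
theorem two_sided_guarantee
    {Ω : Type*} {m0 : MeasurableSpace Ω} {μ : Measure Ω} [IsProbabilityMeasure μ]
    (ℱ ℱ' : Filtration ℕ m0) (K N T : ℕ) (hT : 1 ≤ T)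
    (D D' : ℕ → Ω → ℝ) (c : ℕ → ℝ) (p q : ℕ → ℝ) (m : ℝ) (V V' : Ω → ℝ)
    (hadapted : ∀ k, StronglyMeasurable[ℱ (k + 1)] (D k))
    (hadapted' : ∀ k, StronglyMeasurable[ℱ' (k + 1)] (D' k))
    (hint : ∀ k, Integrable (D k) μ) (hint' : ∀ k, Integrable (D' k) μ)
    (hzero : ∀ k, μ[D k | ℱ k] =ᵐ[μ] 0)
    (hzero' : ∀ k, μ[D' k | ℱ' k] =ᵐ[μ] 0)
    (hc : ∀ k, 0 ≤ c k)
    (hbdd : ∀ k, ∀ᵐ ω ∂μ, |D k ω| ≤ c k)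
    (hbdd' : ∀ k, ∀ᵐ ω ∂μ, |D' k ω| ≤ c k)
    (hp : ∀ i, 0 ≤ p i ∧ p i ≤ 1) (hq : ∀ i, 0 ≤ q i ∧ q i ≤ 1)
    (hm : m = ∑ i ∈ Finset.range N, (2 * p i - 1) * q i) (hmpos : 0 < m)
    (hsq : ∑ k ∈ Finset.range K, (c k) ^ 2
        = ∑ i ∈ Finset.range N, (((T : ℝ) - 1) * (2 * p i - 1) ^ 2 + 4))
    (hV : ∀ ω, V ω = m + ∑ k ∈ Finset.range K, D k ω)
    (hV' : ∀ ω, V' ω = -m + ∑ k ∈ Finset.range K, D' k ω) :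
    μ {ω | 0 < V ω}
        ≥ ENNReal.ofReal (1 - Real.exp (-m ^ 2 /
            (2 * ∑ i ∈ Finset.range N, (((T : ℝ) - 1) * (2 * p i - 1) ^ 2 + 4))))
    ∧ μ {ω | 0 < V' ω}
        ≤ ENNReal.ofReal (Real.exp (-m ^ 2 /
            (2 * ∑ i ∈ Finset.range N, (((T : ℝ) - 1) * (2 * p i - 1) ^ 2 + 4)))) :=
  two_sided_guarantee_general ℱ ℱ' K N T D D' c p m V V' hadapted hadapted' hint hint' hzero hzero'
    hbdd hbdd' hmpos hsq hV hV'
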